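/- arXiv:1707.06590 — 6 statements merged into one kernel-verified Lean document; each statement's English description precedes it below -/
import Mathlib

section
/- For all natural numbers i and j, ∑_{k=0}^{i} (−1)^{j+k} · a_{ik} · r_{kj} = (1 if i = j, else 0), where a_{ik} is the coefficient of x^i in (x(1+x))^k ∈ ℝ[[x]] and r_{kj} is the coefficient of x^k in (xC(x))^j ∈ ℝ[[x]]. (In matrix form this says that the lower triangular matrix with (i,j) entry r_{ij} is the inverse of D𝔽^S D, i.e. D(𝔽^S)⁻¹D = (1, xC(x)).) -/
/-!
With `u = -x(1+x)`, the sum is `(-1)^j` times the coefficient of `x^i` in `(xC(x))^j ∘ u`.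
From `C = 1 + xC²`, the series `y = xC(x)` satisfies `y - y² = x`, so `y ∘ u` satisfies
`y - y² = u`, and so does `-x`. A solution without constant term is unique, because
`(y - z)(1 - y - z) = (y - y²) - (z - z²)` and `1 - y - z` is a unit. Hence `(xC(x))^j ∘ u = (-x)^j`.
-/

open PowerSeries Finset

/-- The generating function of the Catalan numbers. -/
noncomputable def catalanGF : PowerSeries ℝ :=
  PowerSeries.mk fun n => (catalan n : ℝ)

namespace PowerSeries

variable {R : Type*} [CommRing R]

theorem coeff_subst_eq_sum_range {a : R⟦X⟧} (ha : constantCoeff a = 0) (f : R⟦X⟧) (n : ℕ) :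
    coeff n (f.subst a) = ∑ k ∈ range (n + 1), coeff k f * coeff n (a ^ k) := by
  rw [coeff_subst' (HasSubst.of_constantCoeff_zero' ha)]
  refine finsum_eq_sum_of_support_subset _ fun k hk => mem_range.2 ?_
  by_contra! hnk
  have hvanish : coeff n (a ^ k) = 0 :=
    X_pow_dvd_iff.1 (pow_dvd_pow_of_dvd (X_dvd_iff.2 ha) k) n (by omega)
  exact hk (by simp [hvanish])

theorem eq_of_sub_sq_eq_sub_sq {y z : R⟦X⟧} (hy : constantCoeff y = 0)
    (hz : constantCoeff z = 0) (h : y - y ^ 2 = z - z ^ 2) : y = z := by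
  have hunit : IsUnit (1 - y - z) := by
    simp [isUnit_iff_constantCoeff, hy, hz]
  have hprod : (1 - y - z) * (y - z) = 0 := by linear_combination h
  exact sub_eq_zero.1 (hunit.mul_right_eq_zero.1 hprod)

theorem coeff_neg_pow (f : R⟦X⟧) (k n : ℕ) :
    coeff n ((-f) ^ k) = (-1) ^ k * coeff n (f ^ k) := by
  rw [← neg_one_smul R f, smul_pow, map_smul, smul_eq_mul]

end PowerSeries

theorem catalanGF_eq_map : catalanGF = catalanSeries.map (Nat.castRingHom ℝ) := by
  ext n
  simp [catalanGF]

theorem X_mul_catalanGF_eq : X * catalanGF = X + (X * catalanGF) ^ 2 := by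
  have h := congrArg (map (Nat.castRingHom ℝ)) catalanSeries_sq_mul_X_add_one
  rw [map_add, map_mul, map_pow, map_X, map_one, ← catalanGF_eq_map] at h
  linear_combination X * h.symm

theorem subst_X_mul_catalanGF :
    (X * catalanGF).subst (-(X * (1 + X)) : ℝ⟦X⟧) = -X := by
  have hu : constantCoeff (-(X * (1 + X)) : ℝ⟦X⟧) = 0 := by simp
  have hs := HasSubst.of_constantCoeff_zero' hu
  apply eq_of_sub_sq_eq_sub_sq
  · exact constantCoeff_subst_eq_zero hu _ (by simp)
  · simp
  · have h := congrArg (subst (-(X * (1 + X)) : ℝ⟦X⟧)) X_mul_catalanGF_eq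
    rw [subst_add hs, subst_pow hs, subst_X hs] at h
    linear_combination h

/-- `D(𝔽^S)⁻¹D = (1, xC(x))`: the matrix with `(i,j)` entry the coefficient of `x^i` in
`(xC(x))^j` is the inverse of the matrix with `(i,j)` entry
`(-1)^(i+j)` times the coefficient of `x^i` in `(x(1+x))^j`. -/
theorem stmt_0 (i j : ℕ) :
    (∑ k ∈ Finset.range (i + 1),
        (-1 : ℝ) ^ (j + k) *
          (PowerSeries.coeff (R := ℝ) i ((PowerSeries.X * (1 + PowerSeries.X)) ^ k)) *
          (PowerSeries.coeff (R := ℝ) k ((PowerSeries.X * catalanGF) ^ j))) =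
      if i = j then (1 : ℝ) else 0 := by
  have hu : constantCoeff (-(X * (1 + X)) : ℝ⟦X⟧) = 0 := by simp
  have hsubst : ((X * catalanGF) ^ j).subst (-(X * (1 + X)) : ℝ⟦X⟧) = (-X) ^ j := by
    rw [subst_pow (HasSubst.of_constantCoeff_zero' hu), subst_X_mul_catalanGF]
  calc _ = (-1) ^ j * ∑ k ∈ range (i + 1),
        coeff k ((X * catalanGF) ^ j) * coeff i ((-(X * (1 + X)) : ℝ⟦X⟧) ^ k) := by
        rw [mul_sum]
        refine sum_congr rfl fun k _ => ?_
        rw [coeff_neg_pow, pow_add]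
        ring
    _ = (-1) ^ j * coeff i ((-X : ℝ⟦X⟧) ^ j) := by
        rw [← coeff_subst_eq_sum_range hu, hsubst]
    _ = if i = j then 1 else 0 := by
        rw [coeff_neg_pow, coeff_X_pow, ← mul_assoc, ← pow_add, Even.neg_one_pow ⟨j, rfl⟩,
          one_mul]
end

section
/- In ℝ[[x]], substituting the power series x·(1+x)⁻¹ (which has zero constant term) into the Catalan generating function C gives 1 + x·M(x); that is, C(x/(1+x)) = 1 + x·M(x), where M(x) is the Motzkin generating function. -/
open PowerSeries Finset

/-- The generating function of the Motzkin numbers `Mₙ = ∑_{k=0}^{⌊n/2⌋} binom(n,2k)·Cₖ`. -/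
noncomputable def motzkinGF : PowerSeries ℝ :=
  PowerSeries.mk fun n =>
    ((∑ k ∈ Finset.range (n / 2 + 1), n.choose (2 * k) * catalan k : ℕ) : ℝ)

/-- Formal substitution of a power series `g` with zero constant term into `f`:
the coefficient of `x^n` in `f(g(x))` is `∑_{k=0}^{n} fₖ · [xⁿ](g^k)`. -/
noncomputable def psComp (f g : PowerSeries ℝ) : PowerSeries ℝ :=
  PowerSeries.mk fun n =>
    ∑ k ∈ Finset.range (n + 1), PowerSeries.coeff (R := ℝ) k f * PowerSeries.coeff (R := ℝ) n (g ^ k)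

/-!
Both sides are fixed points of `S ↦ 1 + g S²` for `g = x/(1+x)`: the left one because
`C = 1 + x C²` and substitution is a ring homomorphism, the right one because the Motzkin series
satisfies `(1 - x) M = 1 + x² M²`. As `g` has no constant term, `1 - g (S + T)` is a unit, so this
fixed point is unique. The Motzkin equation in turn follows from `M = C(x²/(1-x)²) / (1-x)`, which
is the defining sum `Mₙ = ∑ binom(n,2k) Cₖ` read through `∑ₙ binom(n,j) xⁿ = xʲ / (1-x)^(j+1)`.
-/

namespace PowerSeries

variable {R : Type*}

theorem coeff_pow_of_lt_of_constantCoeff_eq_zero [Semiring R] {g : R⟦X⟧} (hg : constantCoeff g = 0)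
    {n k : ℕ} (h : n < k) : coeff n (g ^ k) = 0 :=
  coeff_of_lt_order n ((Nat.cast_lt.2 h).trans_le (le_order_pow_of_constantCoeff_eq_zero k hg))

variable [CommRing R]

theorem eq_of_eq_add_mul_sq {a g S T : R⟦X⟧} (hg : constantCoeff g = 0)
    (hS : S = a + g * S ^ 2) (hT : T = a + g * T ^ 2) : S = T := by
  have hunit : IsUnit (1 - g * (S + T)) := by
    simp [isUnit_iff_constantCoeff, hg]
  have hfactor : (1 - g * (S + T)) * (S - T) = 0 := by
    linear_combination hS - hT
  exact sub_eq_zero.1 (hunit.mul_right_eq_zero.1 hfactor)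

theorem coeff_X_pow_mul_mk_one_pow (n j : ℕ) :
    coeff n (X ^ j * (mk 1 : R⟦X⟧) ^ (j + 1)) = (n.choose j : R) := by
  rw [mk_one_pow_eq_mk_choose_add, coeff_X_pow_mul', coeff_mk]
  split_ifs with h
  · rw [Nat.add_sub_cancel' h]
  · rw [Nat.choose_eq_zero_of_lt (by omega), Nat.cast_zero]

end PowerSeries

open PowerSeries

theorem coeff_psComp_of_le (f : ℝ⟦X⟧) {g : ℝ⟦X⟧} (hg : constantCoeff g = 0) {m n : ℕ}
    (h : m ≤ n) :
    coeff m (psComp f g) = ∑ k ∈ range (n + 1), coeff k f * coeff m (g ^ k) := by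
  rw [psComp, coeff_mk]
  refine sum_subset (range_subset_range.2 (by omega)) fun k _ hk => ?_
  rw [coeff_pow_of_lt_of_constantCoeff_eq_zero hg (by simpa using hk), mul_zero]

theorem psComp_eq_subst (f : ℝ⟦X⟧) {g : ℝ⟦X⟧} (hg : constantCoeff g = 0) :
    psComp f g = f.subst g := by
  ext n
  rw [coeff_subst' (HasSubst.of_constantCoeff_zero' hg),
    finsum_eq_sum_of_support_subset (s := range (n + 1)), coeff_psComp_of_le f hg le_rfl]
  · simp_rw [smul_eq_mul]
  · refine Function.support_subset_iff'.2 fun k hk => ?_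
    rw [coeff_pow_of_lt_of_constantCoeff_eq_zero hg (by simpa using hk), smul_zero]

theorem coeff_mul_psComp (u f : ℝ⟦X⟧) {g : ℝ⟦X⟧} (hg : constantCoeff g = 0) (n : ℕ) :
    coeff n (u * psComp f g) = ∑ k ∈ range (n + 1), coeff k f * coeff n (u * g ^ k) := by
  simp_rw [coeff_mul, mul_sum]
  rw [sum_comm]
  refine sum_congr rfl fun p hp => ?_
  rw [coeff_psComp_of_le f hg (Finset.HasAntidiagonal.antidiagonal.snd_le hp), mul_sum]
  exact sum_congr rfl fun k _ => by ring

theorem catalanGF_eq_one_add_X_mul_sq : catalanGF = 1 + X * catalanGF ^ 2 := by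
  have h := congrArg (map (Nat.castRingHom ℝ)) catalanSeries_sq_mul_X_add_one
  have hmap : map (Nat.castRingHom ℝ) catalanSeries = catalanGF := by
    ext n
    simp [catalanGF]
  simp only [map_add, map_mul, map_pow, map_X, map_one, hmap] at h
  linear_combination -h

theorem psComp_catalanGF {g : ℝ⟦X⟧} (hg : constantCoeff g = 0) :
    psComp catalanGF g = 1 + g * psComp catalanGF g ^ 2 := by
  have hsubst := HasSubst.of_constantCoeff_zero' hg
  rw [psComp_eq_subst _ hg]
  conv_lhs => rw [catalanGF_eq_one_add_X_mul_sq]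
  rw [subst_add hsubst, subst_mul hsubst, subst_pow hsubst, subst_X hsubst,
    ← coe_substAlgHom hsubst, map_one]

theorem motzkinGF_eq_mk_one_mul_psComp :
    motzkinGF = PowerSeries.mk 1 * psComp catalanGF (X ^ 2 * PowerSeries.mk 1 ^ 2) := by
  ext n
  rw [coeff_mul_psComp _ _ (by simp)]
  simp only [motzkinGF, catalanGF, coeff_mk, Nat.cast_sum, Nat.cast_mul]
  rw [sum_subset (range_subset_range.2 (show n / 2 + 1 ≤ n + 1 by omega)) fun k _ hk => by
    rw [Nat.choose_eq_zero_of_lt (by simp only [mem_range] at hk; omega), Nat.cast_zero, zero_mul]]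
  refine sum_congr rfl fun k _ => ?_
  rw [show PowerSeries.mk 1 * (X ^ 2 * PowerSeries.mk 1 ^ 2) ^ k =
      X ^ (2 * k) * (PowerSeries.mk 1 : ℝ⟦X⟧) ^ (2 * k + 1) by ring,
    coeff_X_pow_mul_mk_one_pow, mul_comm]

theorem one_sub_X_mul_motzkinGF : (1 - X) * motzkinGF = 1 + X ^ 2 * motzkinGF ^ 2 := by
  have hC := psComp_catalanGF (g := X ^ 2 * PowerSeries.mk 1 ^ 2) (by simp)
  rw [motzkinGF_eq_mk_one_mul_psComp]
  linear_combination
    psComp catalanGF (X ^ 2 * PowerSeries.mk 1 ^ 2) * mk_one_mul_one_sub_eq_one ℝ + hC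

/-- `C(x/(1+x)) = 1 + x·M(x)` in `ℝ[[x]]`. -/
theorem stmt_3 :
    psComp catalanGF (PowerSeries.X * (1 + PowerSeries.X)⁻¹) =
      1 + PowerSeries.X * motzkinGF := by
  have hg : constantCoeff (X * (1 + X)⁻¹ : ℝ⟦X⟧) = 0 := by simp
  have hinv : (1 + X : ℝ⟦X⟧) * (1 + X)⁻¹ = 1 := PowerSeries.mul_inv_cancel _ (by simp)
  refine eq_of_eq_add_mul_sq hg (psComp_catalanGF hg) ?_
  linear_combination (X * (1 + X)⁻¹) * one_sub_X_mul_motzkinGF - X * motzkinGF * hinv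
end

section
/- Let (aₙ) be a sequence of real numbers with generating function g(x) = ∑ aₙxⁿ ∈ ℝ[[x]], and let (bₙ) be the sequence whose generating function is x·(2−x)⁻¹·g(x). Then (∀ n, ∑_{k=0}^{n} (−1)^k binom(n,k) aₖ = aₙ) holds if and only if (∀ n, ∑_{k=0}^{n} (−1)^k binom(n,k) bₖ = −bₙ) holds. (That is, g is the generating function of a P-invariant sequence of the first kind iff (x/(2−x))g(x) is the generating function of an inverse P-invariant sequence of the first kind.) -/
/-!
The relation `b = x(2−x)⁻¹ g` says `b₀ = 0` and `2bₙ₊₁ − bₙ = aₙ`. The signed binomial transform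
`T = PD` satisfies `(Tc)ₙ₊₁ = (Tc)ₙ − (T(c ∘ succ))ₙ`, so it turns this recurrence into
`2(Tb)ₙ₊₁ − (Tb)ₙ = −(Ta)ₙ` with `(Tb)₀ = 0`. Hence if `Ta = a`, then `Tb` and `−b` solve the
same recurrence and agree; conversely `Tb = −b` forces `Ta = a`.
-/

open PowerSeries Finset

section SignedBinomialTransform

variable {R : Type*} [CommRing R]

def signedBinomialTransform (c : ℕ → R) (n : ℕ) : R :=
  ∑ k ∈ range (n + 1), (-1 : R) ^ k * (n.choose k : R) * c k

@[simp]
lemma signedBinomialTransform_zero (c : ℕ → R) : signedBinomialTransform c 0 = c 0 := by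
  simp [signedBinomialTransform]

lemma signedBinomialTransform_add (c d : ℕ → R) (n : ℕ) :
    signedBinomialTransform (c + d) n =
      signedBinomialTransform c n + signedBinomialTransform d n := by
  simp only [signedBinomialTransform, Pi.add_apply, mul_add, sum_add_distrib]

lemma signedBinomialTransform_const_mul (r : R) (c : ℕ → R) (n : ℕ) :
    signedBinomialTransform (fun k => r * c k) n = r * signedBinomialTransform c n := by
  simp only [signedBinomialTransform, mul_sum]
  exact sum_congr rfl fun k _ => by ring

lemma signedBinomialTransform_succ (c : ℕ → R) (n : ℕ) :
    signedBinomialTransform c (n + 1) =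
      signedBinomialTransform c n - signedBinomialTransform (fun k => c (k + 1)) n := by
  have pascal : ∀ k ∈ range (n + 1),
      (-1 : R) ^ (k + 1) * ((n + 1).choose (k + 1) : R) * c (k + 1) =
        (-1 : R) ^ (k + 1) * (n.choose (k + 1) : R) * c (k + 1) -
          (-1 : R) ^ k * (n.choose k : R) * c (k + 1) := by
    intro k _
    rw [Nat.choose_succ_succ, Nat.cast_add]
    ring
  have shifted : ∑ k ∈ range (n + 1), (-1 : R) ^ (k + 1) * (n.choose (k + 1) : R) * c (k + 1) =
      signedBinomialTransform c n - c 0 := by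
    rw [signedBinomialTransform, sum_range_succ' (fun k => (-1 : R) ^ k * (n.choose k : R) * c k),
      sum_range_succ]
    simp
  rw [signedBinomialTransform, sum_range_succ', sum_congr rfl pascal, sum_sub_distrib, shifted]
  simp only [signedBinomialTransform, pow_zero, Nat.choose_zero_right, Nat.cast_one, one_mul]
  ring

lemma signedBinomialTransform_two_mul_succ_sub {a b : ℕ → R}
    (hrec : ∀ n, 2 * b (n + 1) - b n = a n) (n : ℕ) :
    2 * signedBinomialTransform b (n + 1) - signedBinomialTransform b n =
      -signedBinomialTransform a n := by
  have hshift : (fun k => 2 * b (k + 1)) = a + b := by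
    funext k
    simp only [Pi.add_apply, ← hrec k, sub_add_cancel]
  have := signedBinomialTransform_const_mul 2 (fun k => b (k + 1)) n
  rw [hshift, signedBinomialTransform_add] at this
  rw [signedBinomialTransform_succ]
  linear_combination this

end SignedBinomialTransform

lemma eq_of_two_mul_succ_sub_eq {K : Type*} [Field K] (h2 : (2 : K) ≠ 0) {u v : ℕ → K}
    (h0 : u 0 = v 0) (h : ∀ n, 2 * u (n + 1) - u n = 2 * v (n + 1) - v n) : u = v := by
  funext n
  induction n with
  | zero => exact h0
  | succ n ih =>
    have := h n
    rw [ih] at this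
    exact mul_left_cancel₀ h2 (by linear_combination this)

lemma recurrence_of_eq_X_mul_inv_two_sub_X_mul {K : Type*} [Field K] (h2 : (2 : K) ≠ 0)
    {a b : ℕ → K} (h : PowerSeries.mk b = X * (2 - X)⁻¹ * PowerSeries.mk a) :
    b 0 = 0 ∧ ∀ n, 2 * b (n + 1) - b n = a n := by
  have hunit : (2 - X : K⟦X⟧) * (2 - X)⁻¹ = 1 := by
    apply PowerSeries.mul_inv_cancel
    simpa [map_ofNat] using h2
  have hmul : (2 - X) * PowerSeries.mk b = X * PowerSeries.mk a := by
    rw [h, ← mul_assoc, mul_left_comm, hunit, mul_one]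
  constructor
  · simpa using congrArg constantCoeff h
  · intro n
    have := congrArg (coeff (n + 1)) hmul
    simp only [sub_mul, two_mul, map_sub, map_add, coeff_mk, coeff_succ_X_mul] at this
    linear_combination this

/-- A sequence `(aₙ)` is P-invariant of the first kind iff the sequence `(bₙ)` with
generating function `(x/(2−x))·g(x)` (where `g` is the generating function of `(aₙ)`) is
inverse P-invariant of the first kind. -/
theorem stmt_12 (a b : ℕ → ℝ)
    (hb : ∀ n : ℕ,
      b n = PowerSeries.coeff n
        (PowerSeries.X * (2 - PowerSeries.X)⁻¹ * PowerSeries.mk a)) :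
    (∀ n : ℕ,
        ∑ k ∈ Finset.range (n + 1), (-1 : ℝ) ^ k * (n.choose k : ℝ) * a k = a n) ↔
      (∀ n : ℕ,
        ∑ k ∈ Finset.range (n + 1), (-1 : ℝ) ^ k * (n.choose k : ℝ) * b k = -b n) := by
  have hmk : PowerSeries.mk b = X * (2 - X)⁻¹ * PowerSeries.mk a := by ext n; simp [hb n]
  obtain ⟨hb0, hrec⟩ := recurrence_of_eq_X_mul_inv_two_sub_X_mul two_ne_zero hmk
  have hT := signedBinomialTransform_two_mul_succ_sub hrec
  change (∀ n, signedBinomialTransform a n = a n) ↔ ∀ n, signedBinomialTransform b n = -b n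
  constructor
  · intro hA
    refine congrFun (eq_of_two_mul_succ_sub_eq two_ne_zero (by simp [hb0]) fun n => ?_)
    rw [hT, hA, ← hrec]
    ring
  · intro hB n
    have := hT n
    rw [hB, hB] at this
    linarith [hrec n]
end

section
/- Let A be a (not necessarily commutative) ring and let r, d ∈ A satisfy d² = 1 and (r·d)² = 1. Then for every positive integer n: (r·d)·(r + d)ⁿ = (r + d)ⁿ and (r·d)·(r − d)ⁿ = −(r − d)ⁿ. -/
/-- If `d² = 1` and `(rd)² = 1` in a (not necessarily commutative) ring, then for every
`n ≥ 1`, `(rd)·(r + d)ⁿ = (r + d)ⁿ` and `(rd)·(r − d)ⁿ = −(r − d)ⁿ`. -/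
theorem stmt_16 {A : Type*} [Ring A] (r d : A) (hd : d ^ 2 = 1)
    (hrd : (r * d) ^ 2 = 1) :
    ∀ n : ℕ, 0 < n →
      (r * d) * (r + d) ^ n = (r + d) ^ n ∧
      (r * d) * (r - d) ^ n = -((r - d) ^ n) := by
  have hrdr : r * d * r = d := by
    have h := congrArg (· * d) hrd
    simp only [sq, one_mul] at h
    calc r * d * r = r * d * r * d ^ 2 := by rw [hd, mul_one]
      _ = r * d * (r * d) * d := by noncomm_ring
      _ = d := h
  have hplus : (r * d) * (r + d) = r + d := by
    rw [mul_add, hrdr, mul_assoc, ← sq, hd, mul_one, add_comm]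
  have hminus : (r * d) * (r - d) = -(r - d) := by
    rw [mul_sub, hrdr, mul_assoc, ← sq, hd, mul_one, neg_sub]
  intro n hn
  obtain ⟨m, rfl⟩ := Nat.exists_eq_succ_of_ne_zero hn.ne'
  constructor
  · rw [pow_succ', ← mul_assoc, hplus, ← pow_succ']
  · rw [pow_succ', ← mul_assoc, hminus, neg_mul, ← pow_succ']
end

section
/- Let g, f ∈ ℝ[[x]] with constant term of g positive, constant term of f equal to 0, and coefficient of x in f positive (so the Riordan matrix R = (g, f), whose (i,j) entry is the coefficient of x^i in g·f^j, has positive main diagonal entries). Then the following are equivalent: (1) there exist h, l ∈ ℝ[[x]] with constant term of h nonzero, constant term of l zero and coefficient of x in l nonzero, such that for all i, j ∈ ℕ the coefficient of x^i in h·l^j equals the coefficient of x^i in g·f^j plus (1 if i = j, else 0) (i.e. R + I is a Riordan matrix); (2) f = x. -/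
open PowerSeries Finset

/-!
The `j`-th column of `R + I` is `g f^j + x^j`. If it equals `h l^j` for all `j`, then the columns
`j = 0, 1, 2` give `h = g + 1` and, from `(h l)^2 = h (h l^2)`, the identity
`(g f + x)^2 = (g + 1)(g f^2 + x^2)`, which rearranges to `g (f - x)^2 = 0`; as `ℝ[[x]]` is a
domain and `g ≠ 0`, `f = x`. Conversely `(g + 1, x)` is a Riordan matrix equal to `(g, x) + I`.
-/

theorem eq_of_add_sq_eq_add_one_mul {R : Type*} [CommRing R] [NoZeroDivisors R] {g f x : R}
    (hg : g ≠ 0) (h : (g * f + x) ^ 2 = (g + 1) * (g * f ^ 2 + x ^ 2)) : f = x := by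
  have hsq : g * (f - x) ^ 2 = 0 := by linear_combination -h
  exact sub_eq_zero.mp <| pow_eq_zero_iff two_ne_zero |>.mp <| (mul_eq_zero.mp hsq).resolve_left hg

theorem PowerSeries.coeff_mul_pow_eq_add_ite_iff {R : Type*} [CommSemiring R]
    (g f h l : PowerSeries R) :
    (∀ i j : ℕ, coeff i (h * l ^ j) = coeff i (g * f ^ j) + if i = j then 1 else 0) ↔
      ∀ j : ℕ, h * l ^ j = g * f ^ j + X ^ j := by
  refine ⟨fun hcoeff j => ?_, fun hcol i j => ?_⟩
  · ext i
    rw [map_add, hcoeff i j, coeff_X_pow]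
  · rw [hcol j, map_add, coeff_X_pow]

theorem stmt_17_general (g f : PowerSeries ℝ)
    (hg : 0 < PowerSeries.constantCoeff g) :
    (∃ h l : PowerSeries ℝ,
        PowerSeries.constantCoeff h ≠ 0 ∧
        PowerSeries.constantCoeff l = 0 ∧
        PowerSeries.coeff 1 l ≠ 0 ∧
        ∀ i j : ℕ,
          PowerSeries.coeff i (h * l ^ j) =
            PowerSeries.coeff i (g * f ^ j) + if i = j then 1 else 0) ↔
      f = PowerSeries.X := by
  constructor
  · rintro ⟨h, l, -, -, -, hcoeff⟩
    have hcol := (coeff_mul_pow_eq_add_ite_iff g f h l).mp hcoeff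
    have h0 : h = g + 1 := by simpa using hcol 0
    have h1 : h * l = g * f + X := by simpa using hcol 1
    have hg0 : g ≠ 0 := by
      rintro rfl
      simp at hg
    refine eq_of_add_sq_eq_add_one_mul hg0 ?_
    calc (g * f + X) ^ 2 = h * (h * l ^ 2) := by rw [← h1]; ring
      _ = (g + 1) * (g * f ^ 2 + X ^ 2) := by rw [hcol 2, h0]
  · rintro rfl
    refine ⟨g + 1, X, ?_, by simp, by simp, ?_⟩
    · rw [map_add, map_one]
      positivity
    · refine (coeff_mul_pow_eq_add_ite_iff g X (g + 1) X).mpr fun j => ?_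
      ring

/-- Let `R = (g, f)` be a Riordan matrix with positive main diagonal entries. Then `R + I`
is a Riordan matrix if and only if `f = x`. -/
theorem stmt_17 (g f : PowerSeries ℝ)
    (hg : 0 < PowerSeries.constantCoeff g)
    (hf0 : PowerSeries.constantCoeff f = 0)
    (hf1 : 0 < PowerSeries.coeff 1 f) :
    (∃ h l : PowerSeries ℝ,
        PowerSeries.constantCoeff h ≠ 0 ∧
        PowerSeries.constantCoeff l = 0 ∧
        PowerSeries.coeff 1 l ≠ 0 ∧
        ∀ i j : ℕ,
          PowerSeries.coeff i (h * l ^ j) =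
            PowerSeries.coeff i (g * f ^ j) + if i = j then 1 else 0) ↔
      f = PowerSeries.X :=
  stmt_17_general g f hg
end

section
/- Let g ∈ ℝ[[x]] satisfy g(x)·g(−x) = 1, where g(−x) denotes the power series obtained from g by x ↦ −x (rescaling by −1). Define h₁ = g + 1 and h_{n+1} = g·hₙ + hₙ(−x) for n ≥ 1. Then for every n ≥ 1, g(x)·hₙ(−x) = hₙ(x); moreover, if the constant term of g is 1, then the constant term of hₙ is 2ⁿ (in particular nonzero). (Consequently, the Riordan involution R = (g(x), −x) satisfies R = BₙDBₙ⁻¹ where Bₙ = (hₙ(x), x) is an invertible element of the Appell subgroup and D = (1, −x); here Bₙ is the matrix whose even-indexed columns come from (RD + D)ⁿ and odd-indexed columns from (RD − D)ⁿ, constructed from R itself.) -/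
open PowerSeries

/-!
Write `σ p = p(−x)`, an involutive ring automorphism of `ℝ⟦X⟧`. If `g · σ g = 1`, then every
series of the form `q = g·p + σ p` satisfies `g · σ q = (g · σ g) · σ p + g · p = q`, and so does
each `hₙ`, including `h₁ = g·1 + σ 1`. Since `σ` fixes constant terms, the recursion doubles the
constant term whenever that of `g` is `1`.
-/

theorem mul_map_mul_add_map {A : Type*} [CommSemiring A] (σ : A →+* A)
    (hσ : ∀ a, σ (σ a) = a) {g : A} (hg : g * σ g = 1) (p : A) :
    g * σ (g * p + σ p) = g * p + σ p := by
  rw [map_add, map_mul, hσ, mul_add, ← mul_assoc, hg, one_mul, add_comm]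

namespace PowerSeries

variable {R : Type*} [CommRing R]

theorem rescale_neg_one_rescale_neg_one (p : R⟦X⟧) : rescale (-1 : R) (rescale (-1) p) = p := by
  rw [rescale_rescale, neg_one_mul, neg_neg, rescale_one, RingHom.id_apply]

@[simp]
theorem constantCoeff_rescale (a : R) (p : R⟦X⟧) :
    constantCoeff (rescale a p) = constantCoeff p := by
  rw [← coeff_zero_eq_constantCoeff_apply, coeff_rescale, pow_zero, one_mul,
    coeff_zero_eq_constantCoeff_apply]

theorem constantCoeff_mul_add_rescale {g : R⟦X⟧} (hg : constantCoeff g = 1) (a : R)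
    (p : R⟦X⟧) : constantCoeff (g * p + rescale a p) = 2 * constantCoeff p := by
  rw [map_add, map_mul, hg, constantCoeff_rescale, one_mul, two_mul]

end PowerSeries

/-- Let `g · g(−x) = 1` (so `R = (g(x), −x)` is a Riordan involution), and define
`h₁ = g + 1`, `h_{n+1} = g·hₙ + hₙ(−x)`. Then `g(x)·hₙ(−x) = hₙ(x)` for all `n ≥ 1`
(so `R = BₙDBₙ⁻¹` with `Bₙ = (hₙ(x), x)` in the Appell subgroup); moreover if the
constant term of `g` is `1` then the constant term of `hₙ` is `2ⁿ`. -/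
theorem stmt_18 (g : PowerSeries ℝ)
    (hg : g * PowerSeries.rescale (-1 : ℝ) g = 1)
    (h : ℕ → PowerSeries ℝ)
    (h1 : h 1 = g + 1)
    (hrec : ∀ n : ℕ, 1 ≤ n →
      h (n + 1) = g * h n + PowerSeries.rescale (-1 : ℝ) (h n)) :
    ∀ n : ℕ, 1 ≤ n →
      g * PowerSeries.rescale (-1 : ℝ) (h n) = h n ∧
      (PowerSeries.constantCoeff g = 1 →
        PowerSeries.constantCoeff (h n) = 2 ^ n) := by
  have hfix := mul_map_mul_add_map _ rescale_neg_one_rescale_neg_one hg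
  intro n hn
  induction n, hn using Nat.le_induction with
  | base =>
    refine ⟨by simpa only [mul_one, map_one, h1] using hfix 1, fun hg₀ => ?_⟩
    rw [h1, map_add, hg₀, map_one]
    norm_num
  | succ m hm ih =>
    rw [hrec m hm]
    exact ⟨hfix (h m), fun hg₀ => by
      rw [constantCoeff_mul_add_rescale hg₀, ih.2 hg₀, pow_succ, mul_comm]⟩
end
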